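/- Let 1 < λ < 2 and A_n = exp(n^{1/(λ−1)}). There exists n₀ ∈ ℕ such that for all n > n₀, (2n² + 4n + 1)·A_n < A_{n+1}/(2(n+1)² + 4(n+1) + 1); equivalently, the disks F_{A_n}(I_n) and F_{A_{n+1}}(I_{n+1}) are separated, with the disk for n+1 lying strictly to the left of the disk for n on the negative real axis. -/
import Mathlib

open Filter

theorem disks_separated (lam : ℝ) (hlam1 : 1 < lam) (hlam2 : lam < 2) :
    ∃ n₀ : ℕ, ∀ n : ℕ, n₀ < n →
      (2 * (n : ℝ) ^ 2 + 4 * n + 1) * Real.exp ((n : ℝ) ^ (1 / (lam - 1))) <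
        Real.exp (((n : ℝ) + 1) ^ (1 / (lam - 1))) /
          (2 * ((n : ℝ) + 1) ^ 2 + 4 * ((n : ℝ) + 1) + 1) := by
  set p := 1 / (lam - 1) with hp_def
  have hl : 0 < lam - 1 := by linarith
  have hp1 : 1 < p := by
    rw [hp_def, lt_div_iff₀ hl]; linarith
  set ε := p - 1 with hε_def
  have hε : 0 < ε := by simp only [hε_def]; linarith
  -- eventual real inequality
  have h1 : ∀ᶠ x : ℝ in atTop, Real.log 196 + 4 * Real.log x < x ^ ε := by
    have h2 := Asymptotics.isLittleO_iff.mp (isLittleO_log_rpow_atTop hε)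
      (c := 1/8) (by norm_num)
    have h3 : Tendsto (fun x : ℝ => x ^ ε) atTop atTop := tendsto_rpow_atTop hε
    filter_upwards [h2, h3.eventually_gt_atTop (2 * Real.log 196 + 2),
      eventually_ge_atTop (1:ℝ)] with x hx hx2 hx1
    have hxε : (0:ℝ) ≤ x ^ ε := Real.rpow_nonneg (by linarith) ε
    rw [Real.norm_eq_abs, Real.norm_eq_abs, abs_of_nonneg hxε] at hx
    have hlog : Real.log x ≤ 1/8 * x ^ ε := le_trans (le_abs_self _) hx
    nlinarith
  have h4 : ∀ᶠ n : ℕ in atTop,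
      Real.log 196 + 4 * Real.log (n:ℝ) < (n:ℝ) ^ ε ∧ (1:ℝ) ≤ (n:ℝ) := by
    have := tendsto_natCast_atTop_atTop (R := ℝ)
    filter_upwards [this.eventually h1, this.eventually (eventually_ge_atTop (1:ℝ))]
      with n h h' using ⟨h, h'⟩
  obtain ⟨n₀, hn₀⟩ := eventually_atTop.mp h4
  refine ⟨n₀, fun n hn => ?_⟩
  obtain ⟨hlogx, hx1⟩ := hn₀ n (le_of_lt hn)
  set x : ℝ := (n : ℝ) with hx_def
  have hx0 : (0:ℝ) < x := by linarith
  have hD : (0:ℝ) < 2 * (x + 1) ^ 2 + 4 * (x + 1) + 1 := by nlinarith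
  rw [lt_div_iff₀ hD]
  -- key: x^p + x^ε ≤ (x+1)^p
  have hkey : x ^ p + x ^ ε ≤ (x + 1) ^ p := by
    have hb : 1 + p * (1 / x) ≤ (1 + 1 / x) ^ p :=
      one_add_mul_self_le_rpow_one_add (le_trans (by norm_num : (-1:ℝ) ≤ 0) (by positivity)) (le_of_lt hp1)
    have hmul : (x + 1) ^ p = x ^ p * (1 + 1 / x) ^ p := by
      rw [← Real.mul_rpow (le_of_lt hx0) (by positivity)]
      congr 1
      field_simp
    rw [hmul]
    have hxp : (0:ℝ) < x ^ p := Real.rpow_pos_of_pos hx0 p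
    have hxε : x ^ ε = x ^ p / x := by
      rw [hε_def, Real.rpow_sub hx0, Real.rpow_one]
    have h5 : x ^ p * (1 + p * (1 / x)) ≤ x ^ p * (1 + 1 / x) ^ p :=
      mul_le_mul_of_nonneg_left hb (le_of_lt hxp)
    calc x ^ p + x ^ ε = x ^ p + x ^ p / x := by rw [hxε]
      _ ≤ x ^ p + p * (x ^ p / x) := by
          have : x ^ p / x ≤ p * (x ^ p / x) := by
            nlinarith [div_pos hxp hx0]
          linarith
      _ = x ^ p * (1 + p * (1 / x)) := by ring
      _ ≤ _ := h5
  -- polynomial bound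
  have hpoly : (2 * x ^ 2 + 4 * x + 1) * (2 * (x + 1) ^ 2 + 4 * (x + 1) + 1)
      ≤ 196 * x ^ 4 := by
    have h7 : 2 * x ^ 2 + 4 * x + 1 ≤ 7 * x ^ 2 := by nlinarith
    have h17 : 2 * (x + 1) ^ 2 + 4 * (x + 1) + 1 ≤ 17 * x ^ 2 := by nlinarith
    nlinarith [mul_le_mul h7 h17 (le_of_lt hD) (by positivity), sq_nonneg x, pow_pos hx0 4]
  have h196 : (196 : ℝ) * x ^ 4 = Real.exp (Real.log 196 + 4 * Real.log x) := by
    rw [Real.exp_add, Real.exp_log (by norm_num),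
      show (4:ℝ) * Real.log x = ((4:ℕ):ℝ) * Real.log x by norm_num,
      ← Real.log_pow, Real.exp_log (by positivity)]
  have hexp : (196 : ℝ) * x ^ 4 < Real.exp (x ^ ε) := by
    rw [h196]; exact Real.exp_lt_exp.mpr hlogx
  have hP0 : (0:ℝ) < 2 * x ^ 2 + 4 * x + 1 := by positivity
  calc (2 * x ^ 2 + 4 * x + 1) * Real.exp (x ^ p) * (2 * (x + 1) ^ 2 + 4 * (x + 1) + 1)
      = (2 * x ^ 2 + 4 * x + 1) * (2 * (x + 1) ^ 2 + 4 * (x + 1) + 1) * Real.exp (x ^ p) := by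
        ring
    _ ≤ 196 * x ^ 4 * Real.exp (x ^ p) :=
        mul_le_mul_of_nonneg_right hpoly (Real.exp_nonneg _)
    _ < Real.exp (x ^ ε) * Real.exp (x ^ p) :=
        mul_lt_mul_of_pos_right hexp (Real.exp_pos _)
    _ = Real.exp (x ^ p + x ^ ε) := by rw [← Real.exp_add]; ring_nf
    _ ≤ Real.exp ((x + 1) ^ p) := Real.exp_le_exp.mpr hkey
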